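/- arXiv:2302.03234 — 3 statements merged into one kernel-verified Lean document; each statement's English description precedes it below -/
import Mathlib

section
/- The element ρ_{pq} = Σ_{1≤i<j≤p} (∂/∂x_i ∧ ∂/∂x_j) ⊗ α_{ij} − Σ_{p+1≤i<j≤n} (∂/∂x_i ∧ ∂/∂x_j) ⊗ α_{ij} − Σ_{1≤i≤p, p+1≤j≤n} (∂/∂x_i ∧ ∂/∂x_j) ⊗ β_{ij} ∈ Λ²𝔍_n ⊗ 𝔥_{p,q} is so(p,q)-invariant. -/
open ExteriorAlgebra

variable {M : Type*} [AddCommGroup M] [Module ℝ M]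

/-- The multilinear map `(v₁,…,v_k) ↦ Σ_l v₁ ∧ … ∧ g(v_l) ∧ … ∧ v_k`. -/
noncomputable def leibnizMulti (g : M →ₗ[ℝ] M) (k : ℕ) :
    MultilinearMap ℝ (fun _ : Fin k => M) (ExteriorAlgebra ℝ M) :=
  ∑ l : Fin k,
    ((ιMulti ℝ k).toMultilinearMap).compLinearMap
      (fun j => if j = l then g else LinearMap.id)

theorem leibnizMulti_apply (g : M →ₗ[ℝ] M) (k : ℕ) (v : Fin k → M) :
    leibnizMulti g k v =
      ∑ l : Fin k, ιMulti ℝ k (fun j => if j = l then g (v j) else v j) := by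
  simp only [leibnizMulti, MultilinearMap.sum_apply, MultilinearMap.compLinearMap_apply]
  refine Finset.sum_congr rfl fun l _ => ?_
  exact congrArg (ιMulti ℝ k) (funext fun j => by split <;> rfl)

theorem leibnizMulti_alternating (g : M →ₗ[ℝ] M) (k : ℕ) (v : Fin k → M)
    (a b : Fin k) (hv : v a = v b) (hab : a ≠ b) : leibnizMulti g k v = 0 := by
  rw [leibnizMulti_apply]
  set f : Fin k → ExteriorAlgebra ℝ M :=
    fun l => ιMulti ℝ k (fun j => if j = l then g (v j) else v j) with hf
  have hb : b ∈ Finset.univ.erase a := Finset.mem_erase.2 ⟨Ne.symm hab, Finset.mem_univ b⟩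
  have h1 : ∀ l ∈ (Finset.univ.erase a).erase b, f l = 0 := by
    intro l hl
    have hlb : b ≠ l := Ne.symm (Finset.ne_of_mem_erase hl)
    have hla : a ≠ l := Ne.symm (Finset.ne_of_mem_erase (Finset.mem_of_mem_erase hl))
    refine AlternatingMap.map_eq_zero_of_eq _ _ ?_ hab
    simp only [if_neg hla, if_neg hlb, hv]
  have hswap : (fun j => if j = b then g (v j) else v j) =
      (fun j => if j = a then g (v j) else v j) ∘ Equiv.swap a b := by
    funext j
    rcases eq_or_ne j a with rfl | hja
    · simp only [Function.comp_apply, Equiv.swap_apply_left, if_neg hab,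
        if_neg (Ne.symm hab), hv]
    · rcases eq_or_ne j b with rfl | hjb
      · simp only [Function.comp_apply, Equiv.swap_apply_right, if_pos rfl, if_pos rfl, hv]
      · simp only [Function.comp_apply, Equiv.swap_apply_of_ne_of_ne hja hjb,
          if_neg hja, if_neg hjb]
  have hfb : f b = - f a := by
    rw [hf]
    simp only
    rw [hswap]
    exact AlternatingMap.map_swap _ _ hab
  calc ∑ l : Fin k, f l
      = ∑ l ∈ (Finset.univ.erase a), f l + f a := (Finset.sum_erase_add _ _ (Finset.mem_univ a)).symm
    _ = (∑ l ∈ (Finset.univ.erase a).erase b, f l + f b) + f a := by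
        rw [Finset.sum_erase_add _ _ hb]
    _ = (0 + f b) + f a := by rw [Finset.sum_eq_zero h1]
    _ = 0 := by rw [hfb]; abel

/-- The alternating map `(v₁,…,v_k) ↦ Σ_l v₁ ∧ … ∧ g(v_l) ∧ … ∧ v_k`. -/
noncomputable def leibnizAlt (g : M →ₗ[ℝ] M) (k : ℕ) :
    M [⋀^Fin k]→ₗ[ℝ] ExteriorAlgebra ℝ M where
  toMultilinearMap := leibnizMulti g k
  map_eq_zero_of_eq' v i j h hij := leibnizMulti_alternating g k v i j h hij

/-- The Leibniz-rule (derivation) extension of a linear map `g : M → M` to the exterior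
algebra of `M`; on `Λ^k` it is `g·(x₁∧…∧x_k) = Σ_l x₁∧…∧[g,x_l]∧…∧x_k`. -/
noncomputable def leibnizDer (g : M →ₗ[ℝ] M) :
    ExteriorAlgebra ℝ M →ₗ[ℝ] ExteriorAlgebra ℝ M :=
  liftAlternating (fun k => leibnizAlt g k)

open Matrix

/-- The diagonal matrix `I_{p,q}` with `p` entries `1` and `q` entries `-1`. -/
def Jmat (p q : ℕ) : Matrix (Fin (p + q)) (Fin (p + q)) ℝ :=
  Matrix.diagonal (fun i => if (i : ℕ) < p then (1 : ℝ) else -1)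

/-- `so(p,q)` as a set of matrices. -/
def soSet (p q : ℕ) : Set (Matrix (Fin (p + q)) (Fin (p + q)) ℝ) :=
  {X | Xᵀ * Jmat p q = -(Jmat p q * X)}

/-- The action `a ↦ [g, a] = −A a` of `g ∈ so(p,q) ⊆ 𝔥_{p,q}` on the translation ideal
`𝔍ₙ ≅ ℝⁿ` (coming from the bracket of `𝔥_{p,q}`). -/
noncomputable def adV {n : ℕ} (A : Matrix (Fin n) (Fin n) ℝ) :
    (Fin n → ℝ) →ₗ[ℝ] (Fin n → ℝ) :=
  -(Matrix.mulVecLin A)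

open TensorProduct

/-- The affine indefinite orthogonal Lie algebra `𝔥_{p,q} = ℝⁿ ⋊ so(p,q)` is modelled by
pairs `(A, v)`: the vector field `x ↦ A x + v`.  Membership in `𝔥_{p,q}` restricts the
matrix part to `so(p,q)`. -/
abbrev Hpair (n : ℕ) := Matrix (Fin n) (Fin n) ℝ × (Fin n → ℝ)

/-- The rotation `α_{ij} = xᵢ ∂/∂xⱼ − xⱼ ∂/∂xᵢ` as an element of `𝔥_{p,q}`. -/
def alphaH {n : ℕ} (i j : Fin n) : Hpair n :=
  (Matrix.single j i (1 : ℝ) - Matrix.single i j (1 : ℝ), 0)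

/-- The boost `β_{ij} = xᵢ ∂/∂xⱼ + xⱼ ∂/∂xᵢ` as an element of `𝔥_{p,q}`. -/
def betaH {n : ℕ} (i j : Fin n) : Hpair n :=
  (Matrix.single j i (1 : ℝ) + Matrix.single i j (1 : ℝ), 0)

/-- The translation `∂/∂xᵢ` as an element of `𝔥_{p,q}`. -/
def ddH {n : ℕ} (i : Fin n) : Hpair n := (0, (Pi.single i (1 : ℝ) : Fin n → ℝ))

/-- The adjoint action `h ↦ [g, h]` of `g = (A, 0) ∈ so(p,q) ⊆ 𝔥_{p,q}` on `𝔥_{p,q}`: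
`[(A,0), (B,w)] = (BA − AB, −A w)`. -/
noncomputable def adH {n : ℕ} (A : Matrix (Fin n) (Fin n) ℝ) : Hpair n →ₗ[ℝ] Hpair n :=
  ((LinearMap.mulRight ℝ A - LinearMap.mulLeft ℝ A).comp (LinearMap.fst ℝ _ _)).prod
    ((-(Matrix.mulVecLin A)).comp (LinearMap.snd ℝ _ _))

/-- The diagonal action of `g ∈ so(p,q)` on `Λ^*𝔍ₙ ⊗ 𝔥_{p,q}`:
`g · (w ⊗ h) = [g,w] ⊗ h + w ⊗ [g,h]`, the bracket being extended to wedges by the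
Leibniz rule. -/
noncomputable def actEH {n : ℕ} (A : Matrix (Fin n) (Fin n) ℝ) :
    (ExteriorAlgebra ℝ (Fin n → ℝ) ⊗[ℝ] Hpair n) →ₗ[ℝ]
      (ExteriorAlgebra ℝ (Fin n → ℝ) ⊗[ℝ] Hpair n) :=
  TensorProduct.map (leibnizDer (adV A)) LinearMap.id +
    TensorProduct.map LinearMap.id (adH A)

/-- The wedge `∂/∂x_{i₁} ∧ … ∧ ∂/∂x_{i_k}` of standard basis vectors. -/
noncomputable def basisWedge {n : ℕ} (k : ℕ) (f : Fin k → Fin n) :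
    ExteriorAlgebra ℝ (Fin n → ℝ) :=
  ExteriorAlgebra.ιMulti ℝ k (fun t => (Pi.single (f t) (1 : ℝ) : Fin n → ℝ))

/-- `ρ_{pq} = Σ_{i<j≤p} (∂ᵢ∧∂ⱼ)⊗α_{ij} − Σ_{p<i<j} (∂ᵢ∧∂ⱼ)⊗α_{ij}
− Σ_{i≤p<j} (∂ᵢ∧∂ⱼ)⊗β_{ij} ∈ Λ²𝔍ₙ ⊗ 𝔥_{p,q}` (0-based indices). -/
noncomputable def rhoPQ (p q : ℕ) :
    ExteriorAlgebra ℝ (Fin (p + q) → ℝ) ⊗[ℝ] Hpair (p + q) :=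
  (∑ i : Fin (p + q), ∑ j : Fin (p + q),
      if (i : ℕ) < (j : ℕ) ∧ (j : ℕ) < p then
        basisWedge 2 ![i, j] ⊗ₜ[ℝ] alphaH i j else 0)
  - (∑ i : Fin (p + q), ∑ j : Fin (p + q),
      if (i : ℕ) < (j : ℕ) ∧ p ≤ (i : ℕ) then
        basisWedge 2 ![i, j] ⊗ₜ[ℝ] alphaH i j else 0)
  - (∑ i : Fin (p + q), ∑ j : Fin (p + q),
      if (i : ℕ) < p ∧ p ≤ (j : ℕ) then
        basisWedge 2 ![i, j] ⊗ₜ[ℝ] betaH i j else 0)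

/-! Pairing the terms `(i, j)` and `(j, i)`, `ρ_{pq} = Σ_{i,j} εⱼ (eᵢ ∧ eⱼ) ⊗ eⱼ eᵢᵀ`, where
`eᵢ = ∂/∂xᵢ`, `εⱼ = ±1` is the signature and `eⱼ eᵢᵀ` is the field `xᵢ ∂/∂xⱼ`. This is the image of
`(Σᵢ eᵢ ⊗ eᵢᵀ) ⊗ (Σⱼ εⱼ eⱼ ⊗ eⱼ)` under the `𝔤𝔩ₙ`-equivariant map
`(a ⊗ dᵀ) ⊗ (b ⊗ c) ↦ (a ∧ b) ⊗ c dᵀ`. The first factor is the identity, invariant under all of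
`𝔤𝔩ₙ`; the second is the inverse of the form `diag(ε)`, invariant under `so(p,q)`. -/

local notation "𝐞" i:max => Pi.single i (1 : ℝ)

theorem leibnizDer_ι_mul_ι (g : M →ₗ[ℝ] M) (u v : M) :
    leibnizDer g (ι ℝ u * ι ℝ v) = ι ℝ (g u) * ι ℝ v + ι ℝ u * ι ℝ (g v) := by
  have hιMulti : ∀ x y : M, ιMulti ℝ 2 ![x, y] = ι ℝ x * ι ℝ y := fun x y => by
    simp [ιMulti_apply]
  rw [← hιMulti, leibnizDer, liftAlternating_apply_ιMulti]
  change leibnizMulti g 2 ![u, v] = _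
  rw [leibnizMulti_apply, Fin.sum_univ_two, ← hιMulti, ← hιMulti]
  congr 2 <;> funext j <;> fin_cases j <;> simp

theorem Finset.sum_sum_eq_sum_sum_ite_lt {ι α : Type*} [Fintype ι] [LinearOrder ι]
    [AddCommMonoid α] (F : ι → ι → α) (hF : ∀ i, F i i = 0) :
    ∑ i, ∑ j, F i j = ∑ i, ∑ j, if i < j then F i j + F j i else 0 := by
  have hsplit : ∀ i j, F i j = (if i < j then F i j else 0) + if j < i then F i j else 0 := by
    intro i j
    rcases lt_trichotomy i j with hij | rfl | hij
    · simp [hij, hij.not_gt]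
    · simp [hF]
    · simp [hij, hij.not_gt]
  simp only [ite_add_zero, Finset.sum_add_distrib]
  rw [Finset.sum_comm (f := fun i j => if i < j then F j i else 0)]
  simp only [← Finset.sum_add_distrib, ← hsplit]

section InvariantTensors

variable {W : Type*} [AddCommGroup W] [Module ℝ W] {n : ℕ}

theorem map_mulVec_single (f : (Fin n → ℝ) →ₗ[ℝ] W) (A : Matrix (Fin n) (Fin n) ℝ)
    (i : Fin n) : f (A *ᵥ 𝐞 i) = ∑ k, A k i • f (𝐞 k) := by
  conv_lhs => rw [mulVec_single_one, pi_eq_sum_univ' (A.col i)]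
  simp [map_sum, map_smul]

theorem map_single_vecMul (f : (Fin n → ℝ) →ₗ[ℝ] W) (A : Matrix (Fin n) (Fin n) ℝ)
    (i : Fin n) : f (𝐞 i ᵥ* A) = ∑ k, A i k • f (𝐞 k) := by
  conv_lhs => rw [single_one_vecMul, pi_eq_sum_univ' (A.row i)]
  simp [map_sum, map_smul]

theorem sum_mulVec_single_eq_sum_single_vecMul
    (B : (Fin n → ℝ) →ₗ[ℝ] (Fin n → ℝ) →ₗ[ℝ] W) (A : Matrix (Fin n) (Fin n) ℝ) :
    ∑ i, B (A *ᵥ 𝐞 i) (𝐞 i) = ∑ i, B (𝐞 i) (𝐞 i ᵥ* A) := by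
  simp only [map_mulVec_single B, LinearMap.sum_apply, LinearMap.smul_apply,
    map_single_vecMul (B _)]
  exact Finset.sum_comm

def metricSign (p : ℕ) {n : ℕ} (i : Fin n) : ℝ := if (i : ℕ) < p then 1 else -1

theorem metricSign_mul_apply_of_mem_soSet {p q : ℕ} {A : Matrix (Fin (p + q)) (Fin (p + q)) ℝ}
    (hA : A ∈ soSet p q) (j k : Fin (p + q)) :
    metricSign p j * A k j = -(metricSign p k * A j k) := by
  have hjk := congr_fun (congr_fun hA j) k
  simp only [Jmat, mul_diagonal, diagonal_mul, Matrix.neg_apply, transpose_apply] at hjk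
  unfold metricSign
  split_ifs at hjk ⊢ <;> linarith

theorem sum_metricSign_smul_eq_zero_of_mem_soSet {p q : ℕ}
    {A : Matrix (Fin (p + q)) (Fin (p + q)) ℝ} (hA : A ∈ soSet p q)
    (B : (Fin (p + q) → ℝ) →ₗ[ℝ] (Fin (p + q) → ℝ) →ₗ[ℝ] W) :
    ∑ j, metricSign p j • (B (A *ᵥ 𝐞 j) (𝐞 j) + B (𝐞 j) (A *ᵥ 𝐞 j)) = 0 := by
  simp only [smul_add, Finset.sum_add_distrib, map_mulVec_single B, map_mulVec_single (B _),
    LinearMap.sum_apply, LinearMap.smul_apply, Finset.smul_sum, smul_smul]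
  rw [add_comm, Finset.sum_comm]
  simp only [← Finset.sum_add_distrib]
  refine Finset.sum_eq_zero fun j _ => Finset.sum_eq_zero fun k _ => ?_
  rw [← add_smul, metricSign_mul_apply_of_mem_soSet hA, neg_add_cancel, zero_smul]

end InvariantTensors

noncomputable def wedgeTmulOuter {n : ℕ} (a b c d : Fin n → ℝ) :
    ExteriorAlgebra ℝ (Fin n → ℝ) ⊗[ℝ] Hpair n :=
  (ι ℝ a * ι ℝ b) ⊗ₜ[ℝ] (vecMulVec c d, 0)

theorem actEH_wedgeTmulOuter {n : ℕ} (A : Matrix (Fin n) (Fin n) ℝ) (a b c d : Fin n → ℝ) :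
    actEH A (wedgeTmulOuter a b c d) =
      wedgeTmulOuter a b c (d ᵥ* A) - wedgeTmulOuter (A *ᵥ a) b c d
        - wedgeTmulOuter a (A *ᵥ b) c d - wedgeTmulOuter a b (A *ᵥ c) d := by
  have hadH : adH A (vecMulVec c d, 0) = (vecMulVec c (d ᵥ* A), 0) - (vecMulVec (A *ᵥ c) d, 0) := by
    ext <;> simp [adH, vecMulVec_mul, mul_vecMulVec]
  have hadV : ∀ x, adV A x = -(A *ᵥ x) := fun _ => rfl
  rw [wedgeTmulOuter, actEH, LinearMap.add_apply, map_tmul, map_tmul, leibnizDer_ι_mul_ι, hadH,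
    hadV, hadV, LinearMap.id_apply, LinearMap.id_apply]
  simp only [wedgeTmulOuter, map_neg, neg_mul, mul_neg, add_tmul, neg_tmul, tmul_sub]
  abel

theorem rhoPQ_eq_sum (p q : ℕ) :
    rhoPQ p q = ∑ i, ∑ j, metricSign p j • wedgeTmulOuter (𝐞 i) (𝐞 j) (𝐞 j) (𝐞 i) := by
  rw [Finset.sum_sum_eq_sum_sum_ite_lt _ fun i => by simp [wedgeTmulOuter]]
  simp only [rhoPQ, ← Finset.sum_sub_distrib]
  refine Finset.sum_congr rfl fun i _ => Finset.sum_congr rfl fun j _ => ?_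
  have hwedge : basisWedge 2 ![i, j] = ι ℝ (𝐞 i) * ι ℝ (𝐞 j) := by
    simp [basisWedge, ιMulti_apply, vecTail]
  have hwedge_swap : ι ℝ (𝐞 j) * ι ℝ (𝐞 i) = -(ι ℝ (𝐞 i : Fin (p + q) → ℝ) * ι ℝ (𝐞 j)) :=
    eq_neg_of_add_eq_zero_left (ι_add_mul_swap _ _)
  have hα : alphaH i j = (vecMulVec (𝐞 j) (𝐞 i), 0) - (vecMulVec (𝐞 i) (𝐞 j), 0) := by
    simp [alphaH, single_eq_single_vecMulVec_single]
  have hβ : betaH i j = (vecMulVec (𝐞 j) (𝐞 i), 0) + (vecMulVec (𝐞 i) (𝐞 j), 0) := by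
    simp [betaH, single_eq_single_vecMulVec_single]
  simp only [wedgeTmulOuter, metricSign, hwedge, hwedge_swap, hα, hβ, Fin.lt_def]
  split_ifs <;> first | omega | (simp only [tmul_sub, tmul_add, neg_tmul]; module) | simp

theorem sum_wedgeTmulOuter_mulVec_single {n : ℕ} (A : Matrix (Fin n) (Fin n) ℝ)
    (b c : Fin n → ℝ) :
    ∑ i, wedgeTmulOuter (A *ᵥ 𝐞 i) b c (𝐞 i) = ∑ i, wedgeTmulOuter (𝐞 i) b c (𝐞 i ᵥ* A) :=
  sum_mulVec_single_eq_sum_single_vecMul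
    ((TensorProduct.mk ℝ _ _).compl₁₂ (LinearMap.mulRight ℝ (ι ℝ b) ∘ₗ ι ℝ)
      (LinearMap.inl ℝ _ _ ∘ₗ vecMulVecBilin ℝ ℝ c)) A

theorem sum_metricSign_smul_wedgeTmulOuter_eq_zero {p q : ℕ}
    {A : Matrix (Fin (p + q)) (Fin (p + q)) ℝ} (hA : A ∈ soSet p q) (a d : Fin (p + q) → ℝ) :
    ∑ j, metricSign p j •
      (wedgeTmulOuter a (A *ᵥ 𝐞 j) (𝐞 j) d + wedgeTmulOuter a (𝐞 j) (A *ᵥ 𝐞 j) d) = 0 :=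
  sum_metricSign_smul_eq_zero_of_mem_soSet hA
    ((TensorProduct.mk ℝ _ _).compl₁₂ (LinearMap.mulLeft ℝ (ι ℝ a) ∘ₗ ι ℝ)
      (LinearMap.inl ℝ _ _ ∘ₗ (vecMulVecBilin ℝ ℝ).flip d))

/-- `ρ_{pq} ∈ Λ²𝔍ₙ ⊗ 𝔥_{p,q}` is `so(p,q)`-invariant:
`g·ρ_{pq} = 0` for every `g ∈ so(p,q)`, with `g·(w⊗h) = [g,w]⊗h + w⊗[g,h]`. -/
theorem rhoPQ_so_invariant (p q : ℕ) :
    ∀ A ∈ soSet p q, actEH A (rhoPQ p q) = 0 := by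
  intro A hA
  simp only [rhoPQ_eq_sum, map_sum, map_smul, actEH_wedgeTmulOuter]
  calc _ = ∑ i, ∑ j, metricSign p j • (wedgeTmulOuter (𝐞 i) (𝐞 j) (𝐞 j) (𝐞 i ᵥ* A)
            - wedgeTmulOuter (A *ᵥ 𝐞 i) (𝐞 j) (𝐞 j) (𝐞 i))
        - ∑ i, ∑ j, metricSign p j • (wedgeTmulOuter (𝐞 i) (A *ᵥ 𝐞 j) (𝐞 j) (𝐞 i)
            + wedgeTmulOuter (𝐞 i) (𝐞 j) (A *ᵥ 𝐞 j) (𝐞 i)) := by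
        simp only [← Finset.sum_sub_distrib]
        refine Finset.sum_congr rfl fun i _ => Finset.sum_congr rfl fun j _ => ?_
        module
    _ = ∑ j, metricSign p j • (∑ i, wedgeTmulOuter (𝐞 i) (𝐞 j) (𝐞 j) (𝐞 i ᵥ* A)
            - ∑ i, wedgeTmulOuter (A *ᵥ 𝐞 i) (𝐞 j) (𝐞 j) (𝐞 i))
        - ∑ i, ∑ j, metricSign p j • (wedgeTmulOuter (𝐞 i) (A *ᵥ 𝐞 j) (𝐞 j) (𝐞 i)
            + wedgeTmulOuter (𝐞 i) (𝐞 j) (A *ᵥ 𝐞 j) (𝐞 i)) := by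
        congr 1
        rw [Finset.sum_comm]
        simp only [← Finset.sum_sub_distrib, Finset.smul_sum]
    _ = 0 := by
        simp only [sum_wedgeTmulOuter_mulVec_single, sub_self, smul_zero, Finset.sum_const_zero,
          sum_metricSign_smul_wedgeTmulOuter_eq_zero hA]
end

section
/- The element β_{pq} = Σ_{i=1}^{p} (−1)^{i+1} (∂/∂x_1 ∧ ... ∧ ∂̂/∂x_i ∧ ... ∧ ∂/∂x_n) ⊗ ∂/∂x_i − Σ_{i=p+1}^{n} (−1)^{i} (∂/∂x_1 ∧ ... ∧ ∂̂/∂x_i ∧ ... ∧ ∂/∂x_n) ⊗ ∂/∂x_i ∈ Λ^{n−1}𝔍_n ⊗ 𝔥_{p,q} is so(p,q)-invariant. -/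
open ExteriorAlgebra

variable {M : Type*} [AddCommGroup M] [Module ℝ M]

open Matrix

open TensorProduct

/-- The increasing embedding `Fin (n-1) → Fin n` omitting the index `i`. -/
def omitMap (n : ℕ) (i : ℕ) (k : Fin (n - 1)) : Fin n :=
  ⟨if (k : ℕ) < i then (k : ℕ) else (k : ℕ) + 1, by have := k.isLt; split <;> omega⟩

/-- `β_{pq} = Σ_{i≤p} (−1)^{i+1} (∂₁∧…∧∂̂ᵢ∧…∧∂ₙ) ⊗ ∂ᵢ − Σ_{i>p} (−1)^i (∂₁∧…∧∂̂ᵢ∧…∧∂ₙ) ⊗ ∂ᵢ`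
(1-based signs; below `i` is 0-based, so `(−1)^{i+1}` becomes `(−1)^{(i+1)+1}` etc.). -/
noncomputable def betaPQ (p q : ℕ) :
    ExteriorAlgebra ℝ (Fin (p + q) → ℝ) ⊗[ℝ] Hpair (p + q) :=
  (∑ i : Fin (p + q),
      if (i : ℕ) < p then
        ((-1 : ℝ) ^ ((i : ℕ) + 1 + 1)) •
          (basisWedge (p + q - 1) (omitMap (p + q) (i : ℕ)) ⊗ₜ[ℝ] ddH i) else 0)
  - (∑ i : Fin (p + q),
      if p ≤ (i : ℕ) then
        ((-1 : ℝ) ^ ((i : ℕ) + 1)) •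
          (basisWedge (p + q - 1) (omitMap (p + q) (i : ℕ)) ⊗ₜ[ℝ] ddH i) else 0)

/-! Write `eᵢ` for the standard basis of `𝔍ₙ = ℝⁿ`. Since `−(−1)^i = (−1)^{i+1}`, the element
`β_{pq}` does not depend on `p`: it is `Σᵢ (−1)^i (e₁∧⋯∧êᵢ∧⋯∧eₙ) ⊗ ∂ᵢ`, the image of the volume
element `e₁∧⋯∧eₙ` under the natural splitting `x₁∧⋯∧xₙ ↦ Σᵢ (−1)^i (x₁∧⋯∧x̂ᵢ∧⋯∧xₙ) ⊗ xᵢ` of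
`Λⁿ𝔍ₙ` into `Λⁿ⁻¹𝔍ₙ ⊗ 𝔍ₙ ⊆ Λⁿ⁻¹𝔍ₙ ⊗ 𝔥_{p,q}`. The splitting intertwines the Leibniz actions of
`A ∈ gl(n)` on both sides, and `A` acts on the volume element by the trace of its action
`a ↦ −A a` on `𝔍ₙ`. So `A · β_{pq} = −tr(A) β_{pq}`, which vanishes on `so(p,q) ⊆ sl(n)`. -/

section WedgeSplit

variable {M N : Type*} [AddCommGroup M] [Module ℝ M] [AddCommGroup N] [Module ℝ N]

theorem leibnizDer_ιMulti (g : M →ₗ[ℝ] M) {k : ℕ} (v : Fin k → M) :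
    leibnizDer g (ιMulti ℝ k v) = ∑ l : Fin k, ιMulti ℝ k (Function.update v l (g (v l))) := by
  rw [leibnizDer, liftAlternating_apply_ιMulti]
  refine (leibnizMulti_apply g k v).trans (Finset.sum_congr rfl fun l _ => ?_)
  congr 1
  ext j
  rw [Function.update_apply]
  split_ifs with h
  · rw [h]
  · rfl

noncomputable def wedgeSplit (j : M →ₗ[ℝ] N) (m : ℕ) :
    M [⋀^Fin (m + 1)]→ₗ[ℝ] ExteriorAlgebra ℝ M ⊗[ℝ] N :=
  AlternatingMap.alternatizeUncurryFin
    { toFun x := ((TensorProduct.mk ℝ _ N).flip (j x)).compAlternatingMap (ιMulti ℝ m)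
      map_add' x y := by ext; simp
      map_smul' c x := by ext; simp }

theorem wedgeSplit_apply (j : M →ₗ[ℝ] N) {m : ℕ} (v : Fin (m + 1) → M) :
    wedgeSplit j m v =
      ∑ i : Fin (m + 1), (-1 : ℝ) ^ (i : ℕ) • (ιMulti ℝ m (i.removeNth v) ⊗ₜ[ℝ] j (v i)) := by
  simp only [wedgeSplit, AlternatingMap.alternatizeUncurryFin_apply]
  refine Finset.sum_congr rfl fun i _ => ?_
  rw [← Int.cast_smul_eq_zsmul ℝ]
  push_cast
  rfl

noncomputable def diagAct (g : M →ₗ[ℝ] M) (h : N →ₗ[ℝ] N) :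
    ExteriorAlgebra ℝ M ⊗[ℝ] N →ₗ[ℝ] ExteriorAlgebra ℝ M ⊗[ℝ] N :=
  TensorProduct.map (leibnizDer g) LinearMap.id + TensorProduct.map LinearMap.id h

theorem diagAct_wedgeSplit (g : M →ₗ[ℝ] M) (h : N →ₗ[ℝ] N) (j : M →ₗ[ℝ] N) (hj : h ∘ₗ j = j ∘ₗ g)
    {m : ℕ} (v : Fin (m + 1) → M) :
    diagAct g h (wedgeSplit j m v) =
      ∑ l : Fin (m + 1), wedgeSplit j m (Function.update v l (g (v l))) := by
  have hj' (x : M) : h (j x) = j (g x) := LinearMap.congr_fun hj x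
  simp only [diagAct, wedgeSplit_apply, map_sum, map_smul, LinearMap.add_apply, map_tmul,
    LinearMap.id_apply, leibnizDer_ιMulti, hj']
  rw [Finset.sum_comm]
  refine Finset.sum_congr rfl fun i _ => ?_
  -- the term `l = i` is the action on the tensor factor, the terms `l = i.succAbove t` are the
  -- Leibniz rule on the wedge factor
  rw [Fin.sum_univ_succAbove _ i]
  simp [Fin.removeNth_update, Fin.removeNth_update_succAbove, sum_tmul, smul_add,
    Finset.smul_sum, add_comm, Fin.removeNth]

end WedgeSplit

theorem AlternatingMap.sum_map_update_mulVec_eq_trace_smul {R ι N : Type*} [CommRing R]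
    [Fintype ι] [DecidableEq ι] [AddCommGroup N] [Module R N] (F : (ι → R) [⋀^ι]→ₗ[R] N)
    (B : Matrix ι ι R) :
    ∑ l, F (Function.update (fun i => Pi.single i 1) l (B *ᵥ Pi.single l 1)) =
      B.trace • F (fun i => Pi.single i 1) := by
  have hcol (l : ι) : B *ᵥ Pi.single l 1 = ∑ k, B k l • (Pi.single k 1 : ι → R) := by
    ext k; simp [Pi.single_apply]
  simp_rw [hcol, F.map_update_sum, F.map_update_smul]
  rw [Matrix.trace, Finset.sum_smul]
  refine Finset.sum_congr rfl fun l _ => ?_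
  refine (Finset.sum_eq_single l (fun k _ hkl => ?_) (by simp)).trans ?_
  · rw [F.map_eq_zero_of_eq _ (i := k) (j := l) (by simp [hkl]) hkl, smul_zero]
  · rw [Function.update_eq_self, Matrix.diag_apply]

noncomputable def betaEuclid (n : ℕ) : ExteriorAlgebra ℝ (Fin n → ℝ) ⊗[ℝ] Hpair n :=
  ∑ i : Fin n, (-1 : ℝ) ^ (i : ℕ) • (basisWedge (n - 1) (omitMap n i) ⊗ₜ[ℝ] ddH i)

theorem omitMap_succ {m : ℕ} (i : Fin (m + 1)) : omitMap (m + 1) i = i.succAbove := by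
  funext t
  ext
  simp only [omitMap, Fin.succAbove, Fin.lt_def, Fin.val_castSucc]
  split_ifs <;> rfl

theorem betaEuclid_succ (m : ℕ) :
    betaEuclid (m + 1) = wedgeSplit (LinearMap.inr ℝ _ _) m (fun i => Pi.single i 1) := by
  rw [betaEuclid, wedgeSplit_apply]
  refine Finset.sum_congr rfl fun i _ => ?_
  rw [basisWedge, omitMap_succ]
  rfl

theorem betaPQ_eq_betaEuclid (p q : ℕ) : betaPQ p q = betaEuclid (p + q) := by
  rw [betaPQ, betaEuclid, ← Finset.sum_sub_distrib]
  refine Finset.sum_congr rfl fun i _ => ?_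
  rcases lt_or_ge (i : ℕ) p with h | h
  · rw [if_pos h, if_neg (not_le.2 h), sub_zero, pow_succ, pow_succ]
    module
  · rw [if_neg (not_lt.2 h), if_pos h, zero_sub, pow_succ]
    module

theorem actEH_betaEuclid {n : ℕ} (A : Matrix (Fin n) (Fin n) ℝ) :
    actEH A (betaEuclid n) = -A.trace • betaEuclid n := by
  cases n with
  | zero => simp [betaEuclid]
  | succ m =>
    have hinr : adH A ∘ₗ LinearMap.inr ℝ _ _ = LinearMap.inr ℝ _ _ ∘ₗ adV A := by
      refine LinearMap.ext fun w => ?_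
      simp [adH, adV]
    have hadV (w : Fin (m + 1) → ℝ) : adV A w = (-A) *ᵥ w := by
      simp only [adV, LinearMap.neg_apply, Matrix.mulVecLin_apply, Matrix.neg_mulVec]
    rw [betaEuclid_succ, show actEH A = diagAct (adV A) (adH A) from rfl,
      diagAct_wedgeSplit _ _ _ hinr]
    simp_rw [hadV]
    rw [AlternatingMap.sum_map_update_mulVec_eq_trace_smul, Matrix.trace_neg]

theorem trace_eq_zero_of_mem_soSet {p q : ℕ} {A : Matrix (Fin (p + q)) (Fin (p + q)) ℝ}
    (hA : A ∈ soSet p q) : A.trace = 0 := by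
  refine Finset.sum_eq_zero fun m _ => ?_
  have h := congrFun (congrFun hA m) m
  simp only [Jmat, Matrix.mul_diagonal, Matrix.diagonal_mul, Matrix.neg_apply,
    Matrix.transpose_apply] at h
  split_ifs at h <;> simp only [Matrix.diag_apply] <;> linarith

/-- `β_{pq} ∈ Λ^{n−1}𝔍ₙ ⊗ 𝔥_{p,q}` is `so(p,q)`-invariant. -/
theorem betaPQ_so_invariant (p q : ℕ) :
    ∀ A ∈ soSet p q, actEH A (betaPQ p q) = 0 := by
  intro A hA
  rw [betaPQ_eq_betaEuclid, actEH_betaEuclid, trace_eq_zero_of_mem_soSet hA, neg_zero, zero_smul]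
end

section
/- The map I : 𝔥_{p,q} → 𝔥_{p,q}, projecting onto the translation ideal (I(∂/∂x_i) = ∂/∂x_i, I(α_{ij}) = I(β_{ij}) = 0), is a Chevalley–Eilenberg 1-cocycle of 𝔥_{p,q} with adjoint coefficients which is not a coboundary; in particular H¹_Lie(𝔥_{p,q}; 𝔥_{p,q}) contains the nonzero class [I]. -/
/-! The cocycle identity for `I` holds on all affine vector fields: both sides equal the
translation part `B v − A w` of `[(A, v), (B, w)]`. If `I = ad_z` on `𝔥_{p,q}`, then testing
on the translations `(0, v)` gives `−z₁ v = v` for every `v`, so `z₁ = −1`; but `−1 ∉ so(p,q)`,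
since that would force `I_{p,q} = −I_{p,q}`. -/

open Matrix

/-- The Lie bracket of affine vector fields: for `X(x) = A x + v`, `Y(x) = B x + w`,
`[X,Y](x) = (BA − AB) x + (B v − A w)`. -/
def hBracket {n : ℕ} (X Y : Hpair n) : Hpair n :=
  (Y.1 * X.1 - X.1 * Y.1, Y.1.mulVec X.2 - X.1.mulVec Y.2)

/-- The projection `I` onto the translation ideal. -/
def Imap {n : ℕ} : Hpair n →ₗ[ℝ] Hpair n :=
  LinearMap.prod 0 (LinearMap.snd ℝ _ _)

theorem Imap_apply {n : ℕ} (x : Hpair n) : Imap x = (0, x.2) := rfl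

theorem Imap_hBracket {n : ℕ} (x y : Hpair n) :
    Imap (hBracket x y) = hBracket x (Imap y) - hBracket y (Imap x) := by
  ext
  · simp [Imap_apply, hBracket]
  · simp only [hBracket, Imap_apply, Pi.sub_apply, zero_mul, mul_zero, sub_self, zero_mulVec,
      zero_sub, Prod.mk_sub_mk, sub_neg_eq_add, Pi.add_apply, Pi.neg_apply]
    ring

theorem hBracket_translation {n : ℕ} (z : Hpair n) (v : Fin n → ℝ) :
    hBracket z (0, v) = (0, -(z.1 *ᵥ v)) := by
  simp [hBracket]

theorem zero_mem_soSet (p q : ℕ) : (0 : Matrix (Fin (p + q)) (Fin (p + q)) ℝ) ∈ soSet p q := by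
  simp [soSet]

theorem Jmat_apply_self_ne_zero (p q : ℕ) (i : Fin (p + q)) : Jmat p q i i ≠ 0 := by
  by_cases hp : (i : ℕ) < p <;> simp [Jmat, hp]

theorem neg_one_notMem_soSet {p q : ℕ} (hn : 0 < p + q) : (-1) ∉ soSet p q := by
  intro h
  have hJ : -Jmat p q = Jmat p q := by simpa [soSet] using h
  exact Jmat_apply_self_ne_zero p q ⟨0, hn⟩ (neg_eq_self.mp (congrFun (congrFun hJ _) _))

/-- `I` is a Chevalley–Eilenberg 1-cocycle of `𝔥_{p,q}` with adjoint coefficients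
(`I([x,y]) = [x, I(y)] − [y, I(x)]` for all `x, y ∈ 𝔥_{p,q}`) which is not a coboundary
(`I ≠ ad_z` on `𝔥_{p,q}` for every `z ∈ 𝔥_{p,q}`); in particular the class `[I]` is a
nonzero element of `H¹_Lie(𝔥_{p,q}; 𝔥_{p,q})`. -/
theorem Imap_cocycle_not_coboundary (p q : ℕ) (hn : 4 ≤ p + q) :
    (∀ x y : Hpair (p + q), x.1 ∈ soSet p q → y.1 ∈ soSet p q →
      Imap (hBracket x y) = hBracket x (Imap y) - hBracket y (Imap x)) ∧
    ¬ (∃ z : Hpair (p + q), z.1 ∈ soSet p q ∧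
        ∀ x : Hpair (p + q), x.1 ∈ soSet p q → Imap x = hBracket z x) := by
  refine ⟨fun x y _ _ => Imap_hBracket x y, ?_⟩
  rintro ⟨z, hz, hImap⟩
  have hz_neg_one : z.1 = -1 := by
    refine ext_iff_mulVec.mpr fun v => ?_
    have hv := congrArg Prod.snd (hImap (0, v) (zero_mem_soSet p q))
    rw [hBracket_translation] at hv
    simpa [Imap_apply, neg_mulVec] using (neg_eq_iff_eq_neg.mp hv.symm)
  exact neg_one_notMem_soSet (by omega) (hz_neg_one ▸ hz)
end
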